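/- arXiv:1510.02554 — 2 statements merged into one kernel-verified Lean document; each statement's English description precedes it below -/
import Mathlib

section
/- For every Gauss code D there exists a set S of chords of D such that the Gauss code obtained from D by the crossing change at S represents the trivial welded knot, i.e., is welded-equivalent to the empty code. -/
/-!
Gauss codes for welded knots.

A Gauss code is a cyclic word in which each chord label occurs exactly twice,
once as a tail (`isHead = false`) and once as a head (`isHead = true`), both
occurrences carrying the common sign of the chord.  We represent the cyclic
word by a linear list of entries, working up to rotation (`List.rotate`) and
injective relabelling of the chords.
-/

/-- An endpoint of a chord: `(chord label, isHead, sign)`, where `isHead = false`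
means a tail (over-passing) endpoint and `isHead = true` a head (under-passing)
endpoint, and the sign `true`/`false` stands for `+1`/`-1`. -/
abbrev GEntry : Type := ℕ × Bool × Bool

/-- A (linear representative of a cyclic) word of endpoints. -/
abbrev GWord : Type := List GEntry

/-- The set of chord labels occurring in a word. -/
def chordSet (w : GWord) : Set ℕ := {a | ∃ e ∈ w, e.1 = a}

/-- `w` is a Gauss code: every chord label that occurs in `w` occurs exactly
twice, once as a tail and once as a head, with a common sign. -/
def IsGaussCode (w : GWord) : Prop :=
  ∀ a ∈ chordSet w,
    w.countP (fun e => e.1 == a) = 2 ∧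
    ∃ s : Bool, (a, false, s) ∈ w ∧ (a, true, s) ∈ w

/-- The crossing change at the set `S` of chords: at every chord of `S`, the
tail and head markings of its two occurrences are exchanged and its sign is
reversed. -/
def crossingChange (S : Finset ℕ) (w : GWord) : GWord :=
  w.map fun e => if e.1 ∈ S then (e.1, !e.2.1, !e.2.2) else e

/-- Deletion of the chord `a` (both of its endpoints) from the word. -/
def deleteChord (a : ℕ) (w : GWord) : GWord :=
  w.filter fun e => e.1 != a

/-- Equality of words up to cyclic permutation. -/
def RotEq (w w' : GWord) : Prop := ∃ n : ℕ, w' = w.rotate n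

/-- Renaming the chords of a word by `f`. -/
def relabelWord (f : ℕ → ℕ) (w : GWord) : GWord := w.map fun e => (f e.1, e.2)

/-- Equality of words up to cyclic permutation and (injective) renaming of
the chords. -/
def CyclicRename (w w' : GWord) : Prop :=
  ∃ (n : ℕ) (f : ℕ → ℕ), Function.Injective f ∧ w' = relabelWord f (w.rotate n)

/-- Raw C1 move (deleting direction): deletion of a chord whose two endpoints
occupy adjacent positions; the inserting direction is the converse relation. -/
def C1delRaw (u v : GWord) : Prop :=
  ∃ (x y : GWord) (a : ℕ) (h s : Bool),
    (∀ e ∈ x ++ y, e.1 ≠ a) ∧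
    u = x ++ (a, h, s) :: (a, !h, s) :: y ∧
    v = x ++ y

/-- Raw W move: interchange of two adjacent endpoints that are both tails
(of any two chords, regardless of signs). -/
def WRaw (u v : GWord) : Prop :=
  ∃ (x y : GWord) (a b : ℕ) (s t : Bool),
    u = x ++ (a, false, s) :: (b, false, t) :: y ∧
    v = x ++ (b, false, t) :: (a, false, s) :: y

/-- Raw C2 move (deleting direction): deletion of a pair of chords of opposite
signs whose two tails occupy adjacent positions and whose two heads occupy
adjacent positions. -/
def C2delRaw (u v : GWord) : Prop :=
  ∃ (x y z : GWord) (a b : ℕ) (s : Bool),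
    a ≠ b ∧
    (∀ e ∈ x ++ y ++ z, e.1 ≠ a ∧ e.1 ≠ b) ∧
    (u = x ++ (a, false, s) :: (b, false, !s) :: (y ++ (a, true, s) :: (b, true, !s) :: z) ∨
     u = x ++ (a, false, s) :: (b, false, !s) :: (y ++ (b, true, !s) :: (a, true, s) :: z)) ∧
    v = x ++ y ++ z

/-- Raw C3 move: the Gauss-code translation of the planar Reidemeister move of
type 3.  Three strands `A`, `B`, `C` (modelled on the lines `y = -1`, `y = x`,
`y = -x` and their directions `(1,0)`, `(1,1)`, `(-1,1)`, possibly reversed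
according to `dA`, `dB`, `dC`) meet pairwise in the chords `a = AB`, `b = AC`,
`c = BC`; `oAB`, `oAC`, `oBC` record which strand passes over in each pair and
must come from a linear height order.  The six endpoints form three adjacent
pairs, one on each strand, and the move exchanges the order within each pair;
the head/tail pattern is determined by the heights and the signs by the heights
and the directions, as in a planar diagram. -/
def C3Raw (u v : GWord) : Prop :=
  ∃ (x y z t : GWord) (a b c : ℕ) (oAB oAC oBC dA dB dC swap : Bool),
    a ≠ b ∧ a ≠ c ∧ b ≠ c ∧
    (oAB = oBC → oAC = oAB) ∧
    (let sa : Bool := (dA == dB) == oAB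
     let sb : Bool := (dA == dC) == oAC
     let sc : Bool := (dB == dC) == oBC
     let PA : GWord :=
       if dA then [(a, !oAB, sa), (b, !oAC, sb)] else [(b, !oAC, sb), (a, !oAB, sa)]
     let PB : GWord :=
       if dB then [(a, oAB, sa), (c, !oBC, sc)] else [(c, !oBC, sc), (a, oAB, sa)]
     let PC : GWord :=
       if dC then [(b, oAC, sb), (c, oBC, sc)] else [(c, oBC, sc), (b, oAC, sb)]
     let Q1 : GWord := if swap then PC else PB
     let Q2 : GWord := if swap then PB else PC
     u = x ++ PA ++ y ++ Q1 ++ z ++ Q2 ++ t ∧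
     v = x ++ PA.reverse ++ y ++ Q1.reverse ++ z ++ Q2.reverse ++ t)

/-- One welded Reidemeister move (C1, C2, C3 or W, in either direction),
performed up to cyclic permutation and renaming of chords. -/
def WeldedStep (u v : GWord) : Prop :=
  ∃ u₀ v₀ : GWord, CyclicRename u u₀ ∧ CyclicRename v₀ v ∧
    (C1delRaw u₀ v₀ ∨ C1delRaw v₀ u₀ ∨ C2delRaw u₀ v₀ ∨ C2delRaw v₀ u₀ ∨
     C3Raw u₀ v₀ ∨ C3Raw v₀ u₀ ∨ WRaw u₀ v₀)

/-- Welded equivalence: two Gauss codes are welded-equivalent if they are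
related by a finite sequence of C1, C2, C3 and W moves (on cyclic words). -/
def WeldedEquiv : GWord → GWord → Prop := Relation.EqvGen WeldedStep

/-- A Gauss code represents the trivial welded knot iff it is
welded-equivalent to the empty code. -/
def RepresentsTrivial (w : GWord) : Prop := WeldedEquiv w []

/-- One C1 or W move (in either direction), up to cyclic permutation and
renaming of chords. -/
def CWStep (u v : GWord) : Prop :=
  ∃ u₀ v₀ : GWord, CyclicRename u u₀ ∧ CyclicRename v₀ v ∧
    (C1delRaw u₀ v₀ ∨ C1delRaw v₀ u₀ ∨ WRaw u₀ v₀)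

/-- Relatedness by a finite sequence of C1 and W moves alone. -/
def CWEquiv : GWord → GWord → Prop := Relation.EqvGen CWStep

/-- One W move, up to cyclic permutation. -/
def WStepRot (u v : GWord) : Prop :=
  ∃ u₀ v₀ : GWord, RotEq u u₀ ∧ RotEq v₀ v ∧ WRaw u₀ v₀

/-- One deleting C1 move, up to cyclic permutation. -/
def C1StepRot (u v : GWord) : Prop :=
  ∃ u₀ v₀ : GWord, RotEq u u₀ ∧ RotEq v₀ v ∧ C1delRaw u₀ v₀

/-- In the linear word `v`, no chord has its head occurring strictly before
its tail. -/
def TailsFirst (v : GWord) : Prop :=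
  ¬ ∃ (x y z : GWord) (a : ℕ) (s s' : Bool),
      v = x ++ (a, true, s) :: (y ++ (a, false, s') :: z)

/-- A Gauss code is descending if the cyclic word can be cut at some point and
read in one of the two directions so that every chord's tail occurs before its
head. -/
def IsDescending (w : GWord) : Prop :=
  ∃ n : ℕ, TailsFirst (w.rotate n) ∨ TailsFirst ((w.rotate n).reverse)

/-- `c(D)`: the minimal number of chords of a Gauss code representing the same
welded knot as `D`. -/
noncomputable def minCrossing (D : GWord) : ℕ :=
  sInf {n : ℕ | ∃ D' : GWord, IsGaussCode D' ∧ WeldedEquiv D D' ∧ (chordSet D').ncard = n}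

/-- `u(D)`: the minimal cardinality of a set `S` of chords of `D` such that the
crossing change at `S` turns `D` into a Gauss code representing the trivial
welded knot. -/
noncomputable def unknottingNumWord (D : GWord) : ℕ :=
  sInf {k : ℕ | ∃ S : Finset ℕ, ↑S ⊆ chordSet D ∧ S.card = k ∧
    WeldedEquiv (crossingChange S D) []}

/-- `u(K)`: the minimum of `u(D')` over all Gauss codes `D'` representing the
same welded knot as `D`. -/
noncomputable def unknottingNum (D : GWord) : ℕ :=
  sInf {k : ℕ | ∃ D' : GWord, IsGaussCode D' ∧ WeldedEquiv D D' ∧ unknottingNumWord D' = k}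

/-! Reading `D` from the base point of the linear representative, change exactly the chords
whose head is met before their tail. In the resulting code every chord is met tail first, so
the first head is preceded by tails only. Tails commute with each other by W moves, so the tail
of that chord can be slid up to its head and the chord removed by a C1 move; the rest of the code
is again met tails first, and induction empties it. -/

open List Relation

lemma CyclicRename.refl (w : GWord) : CyclicRename w w :=
  ⟨0, id, Function.injective_id, by simp [relabelWord]⟩

lemma weldedEquiv_swap_tails (x y : GWord) (a b : ℕ) (s t : Bool) :
    WeldedEquiv (x ++ (a, false, s) :: (b, false, t) :: y)
      (x ++ (b, false, t) :: (a, false, s) :: y) :=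
  .rel _ _ ⟨_, _, .refl _, .refl _, .inr <| .inr <| .inr <| .inr <| .inr <| .inr
    ⟨x, y, a, b, s, t, rfl, rfl⟩⟩

lemma weldedEquiv_delete_adjacent_chord (x y : GWord) (a : ℕ) (s : Bool)
    (hxy : ∀ e ∈ x ++ y, e.1 ≠ a) :
    WeldedEquiv (x ++ (a, false, s) :: (a, true, s) :: y) (x ++ y) :=
  .rel _ _ ⟨_, _, .refl _, .refl _, .inl ⟨x, y, a, false, s, hxy, rfl, rfl⟩⟩

lemma weldedEquiv_slide_tail {m : GWord} (hm : ∀ e ∈ m, e.2.1 = false)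
    (x y : GWord) (a : ℕ) (s : Bool) :
    WeldedEquiv (x ++ (a, false, s) :: (m ++ y)) (x ++ m ++ (a, false, s) :: y) := by
  induction m generalizing x with
  | nil =>
    simp only [nil_append, append_nil]
    exact EqvGen.refl _
  | cons f m ih =>
    obtain ⟨c, h, u⟩ := f
    obtain rfl : h = false := hm _ mem_cons_self
    have hslide := ih (fun e he => hm e (mem_cons_of_mem _ he)) (x ++ [(c, false, u)])
    simp only [append_assoc, cons_append] at hslide ⊢
    exact (weldedEquiv_swap_tails x (m ++ y) a c s u).trans _ _ _ hslide

lemma forall_fst_ne_of_countP_eq_two {x y z : GWord} {e₁ e₂ : GEntry} {a : ℕ}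
    (h₁ : e₁.1 = a) (h₂ : e₂.1 = a)
    (hcount : (x ++ e₁ :: (y ++ e₂ :: z)).countP (fun e => e.1 == a) = 2) :
    ∀ e ∈ x ++ y ++ z, e.1 ≠ a := by
  intro e he hea
  have hpos : 0 < (x ++ y ++ z).countP (fun e => e.1 == a) :=
    countP_pos_iff.mpr ⟨e, he, by simpa using hea⟩
  simp only [countP_append, countP_cons, h₁, h₂, beq_self_eq_true, if_true] at hcount hpos
  omega

lemma IsGaussCode.deleteChord {w : GWord} (hw : IsGaussCode w) (a : ℕ) :
    IsGaussCode (deleteChord a w) := by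
  rintro c ⟨e, he, rfl⟩
  simp only [_root_.deleteChord, mem_filter, bne_iff_ne, ne_eq] at he ⊢
  obtain ⟨hcount, s, htail, hhead⟩ := hw e.1 ⟨e, he.1, rfl⟩
  refine ⟨?_, s, ⟨htail, he.2⟩, hhead, he.2⟩
  rw [countP_filter, ← hcount]
  exact countP_congr fun f _ => by by_cases hf : f.1 = e.1 <;> simp [hf, he.2]

lemma deleteChord_eq_self {a : ℕ} {w : GWord} (hw : ∀ e ∈ w, e.1 ≠ a) :
    deleteChord a w = w :=
  filter_eq_self.mpr fun e he => by simpa using hw e he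

lemma TailsFirst.of_cons {e : GEntry} {q : GWord} (h : TailsFirst (e :: q)) : TailsFirst q :=
  fun ⟨x, y, z, a, s, s', hq⟩ => h ⟨e :: x, y, z, a, s, s', by simp [hq]⟩

lemma IsGaussCode.eq_nil_of_forall_tail {p : GWord} (hgauss : IsGaussCode p)
    (hp : ∀ e ∈ p, e.2.1 = false) : p = [] := by
  obtain _ | ⟨e, p'⟩ := p
  · rfl
  obtain ⟨-, s, -, hhead⟩ := hgauss e.1 ⟨e, mem_cons_self, rfl⟩
  simpa using hp _ hhead

lemma exists_weldedEquiv_delete_first_head {p q : GWord} {b : ℕ} {t : Bool}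
    (hp : ∀ e ∈ p, e.2.1 = false) (hgauss : IsGaussCode (p ++ (b, true, t) :: q))
    (hq : TailsFirst ((b, true, t) :: q)) :
    ∃ p' : GWord, (∀ e ∈ p', e.2.1 = false) ∧ IsGaussCode (p' ++ q) ∧
      WeldedEquiv (p ++ (b, true, t) :: q) (p' ++ q) := by
  obtain ⟨hcount, s, htail, hhead⟩ := hgauss b ⟨_, mem_append_right _ mem_cons_self, rfl⟩
  have htail_p : (b, false, s) ∈ p := by
    rcases mem_append.mp htail with h | h
    · exact h
    obtain ⟨y, z, rfl⟩ := append_of_mem (mem_of_ne_of_mem (by simp) h)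
    exact absurd ⟨[], y, z, b, t, s, rfl⟩ hq
  obtain ⟨p₁, p₂, rfl⟩ := append_of_mem htail_p
  simp only [append_assoc, cons_append] at hcount hhead hgauss ⊢
  have hfree := forall_fst_ne_of_countP_eq_two (e₁ := (b, false, s)) (e₂ := (b, true, t))
    rfl rfl hcount
  obtain rfl : s = t := by
    by_contra hst
    exact hfree (b, true, s) (by simp_all) rfl
  have hdel : deleteChord b (p₁ ++ (b, false, s) :: (p₂ ++ (b, true, s) :: q)) =
      p₁ ++ p₂ ++ q := by
    rw [← deleteChord_eq_self hfree]
    simp [_root_.deleteChord, filter_append]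
  refine ⟨p₁ ++ p₂, fun e he => hp e ?_, hdel ▸ hgauss.deleteChord b, ?_⟩
  · rcases mem_append.mp he with h | h <;> simp [h]
  have hslide := weldedEquiv_slide_tail (m := p₂)
    (fun e he => hp e (mem_append_right _ (mem_cons_of_mem _ he))) p₁ ((b, true, s) :: q) b s
  have hcancel := weldedEquiv_delete_adjacent_chord (p₁ ++ p₂) q b s hfree
  simp only [append_assoc] at hslide hcancel ⊢
  exact hslide.trans _ _ _ hcancel

lemma weldedEquiv_nil_of_tails_append {q : GWord} :
    ∀ {p : GWord}, (∀ e ∈ p, e.2.1 = false) → IsGaussCode (p ++ q) → TailsFirst q →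
      WeldedEquiv (p ++ q) [] := by
  induction q with
  | nil =>
    intro p hp hgauss _
    rw [append_nil] at hgauss ⊢
    rw [hgauss.eq_nil_of_forall_tail hp]
    exact EqvGen.refl _
  | cons e q ih =>
    intro p hp hgauss hq
    obtain ⟨b, _ | _, t⟩ := e
    · have hp' : ∀ e ∈ p ++ [(b, false, t)], e.2.1 = false := by simpa using hp
      simpa using ih hp' (by simpa using hgauss) hq.of_cons
    obtain ⟨p', hp', hgauss', hdelete⟩ := exists_weldedEquiv_delete_first_head hp hgauss hq
    exact hdelete.trans _ _ _ (ih hp' hgauss' hq.of_cons)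

lemma weldedEquiv_nil_of_tailsFirst {w : GWord} (hgauss : IsGaussCode w)
    (htails : TailsFirst w) :
    WeldedEquiv w [] :=
  weldedEquiv_nil_of_tails_append (p := []) (by simp) hgauss htails

def changeCrossing (S : Finset ℕ) (e : GEntry) : GEntry :=
  if e.1 ∈ S then (e.1, !e.2.1, !e.2.2) else e

lemma crossingChange_eq_map (S : Finset ℕ) (w : GWord) :
    crossingChange S w = w.map (changeCrossing S) :=
  rfl

@[simp]
lemma changeCrossing_fst (S : Finset ℕ) (e : GEntry) : (changeCrossing S e).1 = e.1 := by
  unfold changeCrossing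
  split_ifs <;> rfl

lemma chordSet_crossingChange (S : Finset ℕ) (w : GWord) :
    chordSet (crossingChange S w) = chordSet w := by
  ext a
  simp only [chordSet, Set.mem_ofPred_eq, crossingChange_eq_map, mem_map,
    exists_exists_and_eq_and, changeCrossing_fst]

lemma IsGaussCode.crossingChange {w : GWord} (hw : IsGaussCode w) (S : Finset ℕ) :
    IsGaussCode (crossingChange S w) := by
  intro a ha
  rw [chordSet_crossingChange] at ha
  obtain ⟨hcount, s, htail, hhead⟩ := hw a ha
  have htail' := mem_map_of_mem (f := changeCrossing S) htail
  have hhead' := mem_map_of_mem (f := changeCrossing S) hhead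
  rw [← crossingChange_eq_map] at htail' hhead'
  refine ⟨?_, ?_⟩
  · rw [crossingChange_eq_map, countP_map, ← hcount]
    exact countP_congr fun e _ => by simp
  by_cases haS : a ∈ S
  · exact ⟨!s, by simpa [changeCrossing, haS] using hhead',
      by simpa [changeCrossing, haS] using htail'⟩
  · exact ⟨s, by simpa [changeCrossing, haS] using htail',
      by simpa [changeCrossing, haS] using hhead'⟩

def headFirstChords (w : GWord) : Finset ℕ :=
  (w.map Prod.fst).toFinset.filter fun a => (w.find? (·.1 == a)).any (·.2.1)

lemma headFirstChords_subset_chordSet (w : GWord) : ↑(headFirstChords w) ⊆ chordSet w := by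
  intro a ha
  simp only [headFirstChords, Finset.coe_filter, mem_toFinset, mem_map] at ha
  exact ha.1

lemma mem_headFirstChords_iff {x y : GWord} {e : GEntry} (hx : ∀ f ∈ x, f.1 ≠ e.1) :
    e.1 ∈ headFirstChords (x ++ e :: y) ↔ e.2.1 = true := by
  have hfind : (x ++ e :: y).find? (·.1 == e.1) = some e := by
    rw [find?_append, find?_eq_none.mpr (by simpa using hx)]
    simp
  rw [headFirstChords, Finset.mem_filter, hfind]
  simp

lemma tailsFirst_crossingChange_headFirstChords {w : GWord} (hw : IsGaussCode w) :
    TailsFirst (crossingChange (headFirstChords w) w) := by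
  rintro ⟨x, y, z, a, s, s', h⟩
  simp only [crossingChange_eq_map, map_eq_append_iff, map_eq_cons_iff] at h
  obtain ⟨x₀, _, rfl, -, e₁, _, rfl, he₁, y₀, _, rfl, -, e₂, z₀, rfl, he₂, -⟩ := h
  have ha₁ : e₁.1 = a := by simpa using congrArg Prod.fst he₁
  have ha₂ : e₂.1 = a := by simpa using congrArg Prod.fst he₂
  obtain ⟨hcount, -⟩ := hw a ⟨e₁, by simp, ha₁⟩
  have hfree := forall_fst_ne_of_countP_eq_two ha₁ ha₂ hcount
  have hfirst := mem_headFirstChords_iff (y := y₀ ++ e₂ :: z₀)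
    fun f hf => ha₁ ▸ hfree f (mem_append_left _ (mem_append_left _ hf))
  -- `e₁` is the first endpoint of `a` in `w`, and the change turns it into a tail either way.
  unfold changeCrossing at he₁
  split_ifs at he₁ <;> simp_all

/-- For every Gauss code `D` there is a set `S` of chords of
`D` such that the code obtained from `D` by the crossing change at `S`
represents the trivial welded knot, i.e. is welded-equivalent to the empty
code. -/
theorem crossing_changes_unknot (D : GWord) (hD : IsGaussCode D) :
    ∃ S : Finset ℕ, ↑S ⊆ chordSet D ∧ WeldedEquiv (crossingChange S D) [] :=
  ⟨headFirstChords D, headFirstChords_subset_chordSet D,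
    weldedEquiv_nil_of_tailsFirst (hD.crossingChange _)
      (tailsFirst_crossingChange_headFirstChords hD)⟩
end

section
/- Let D be a Gauss code and x a chord of D such that one of the two open arcs into which the two endpoints of x divide the cyclic word contains no head endpoints. Then a finite sequence of W moves transforms D into a Gauss code in which the two endpoints of x occupy adjacent positions. -/
/-! A chord's tail can be walked across a run of tails by W moves, one transposition at a time.
If the arc from one endpoint of `x` to the other contains only tails, walking the tail of `x`
across that arc brings it next to the head of `x`; W moves are reversible, so the walk can go
in either direction. -/

namespace WRaw

theorem symm {u v : GWord} (h : WRaw u v) : WRaw v u := by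
  obtain ⟨x, y, a, b, s, t, rfl, rfl⟩ := h
  exact ⟨x, y, b, a, t, s, rfl, rfl⟩

instance : Std.Symm WRaw := ⟨fun _ _ => symm⟩

theorem append_append {u v : GWord} (h : WRaw u v) (p q : GWord) :
    WRaw (p ++ u ++ q) (p ++ v ++ q) := by
  obtain ⟨x, y, a, b, s, t, rfl, rfl⟩ := h
  exact ⟨p ++ x, y ++ q, a, b, s, t, by simp, by simp⟩

theorem reflTransGen_append_append {u v : GWord} (h : Relation.ReflTransGen WRaw u v)
    (p q : GWord) : Relation.ReflTransGen WRaw (p ++ u ++ q) (p ++ v ++ q) :=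
  Relation.ReflTransGen.lift (fun w => p ++ w ++ q) (fun _ _ huv => huv.append_append p q) _ _ h

theorem reflTransGen_cons_tail {arc : GWord} (harc : ∀ e ∈ arc, e.2.1 = false) (a : ℕ)
    (s : Bool) : Relation.ReflTransGen WRaw ((a, false, s) :: arc) (arc ++ [(a, false, s)]) := by
  induction arc with
  | nil => rfl
  | cons e arc ih =>
    obtain ⟨b, hb, t⟩ := e
    obtain rfl : hb = false := harc _ List.mem_cons_self
    have swap : WRaw ((a, false, s) :: (b, false, t) :: arc)
        ((b, false, t) :: (a, false, s) :: arc) :=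
      ⟨[], arc, a, b, s, t, rfl, rfl⟩
    have walk := reflTransGen_append_append (ih fun e he => harc e (List.mem_cons_of_mem _ he))
      [(b, false, t)] []
    exact .head swap (by simpa using walk)

theorem exists_reflTransGen_rotate_adjacent {arc : GWord} (harc : ∀ e ∈ arc, e.2.1 = false)
    (x : ℕ) (h s : Bool) (rest : GWord) :
    ∃ w, Relation.ReflTransGen WRaw ((x, h, s) :: (arc ++ (x, !h, s) :: rest)) w ∧
      ∃ (m : ℕ) (y : GWord), w.rotate m = (x, h, s) :: (x, !h, s) :: y := by
  cases h with
  | false =>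
    refine ⟨arc ++ (x, false, s) :: (x, true, s) :: rest, ?_,
      arc.length, rest ++ arc, List.rotate_append_length_eq arc _⟩
    have walk := reflTransGen_cons_tail harc x s
    simpa using reflTransGen_append_append walk [] ((x, true, s) :: rest)
  | true =>
    refine ⟨(x, true, s) :: (x, false, s) :: (arc ++ rest), ?_,
      0, arc ++ rest, List.rotate_zero _⟩
    have walk_back := _root_.symm (reflTransGen_cons_tail harc x s)
    simpa using reflTransGen_append_append walk_back [(x, true, s)] rest

end WRaw

namespace WStepRot

theorem of_wRaw_rotate {D v : GWord} {n : ℕ} (h : WRaw (D.rotate n) v) : WStepRot D v :=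
  ⟨D.rotate n, v, ⟨n, rfl⟩, ⟨0, (List.rotate_zero v).symm⟩, h⟩

theorem exists_reflTransGen_rotEq {D w : GWord} {n : ℕ}
    (h : Relation.ReflTransGen WRaw (D.rotate n) w) :
    ∃ v, Relation.ReflTransGen WStepRot D v ∧ RotEq v w := by
  rcases h.cases_head with hw | ⟨u, hu, huw⟩
  · exact ⟨D, .refl, n, hw.symm⟩
  · refine ⟨w, .head (of_wRaw_rotate hu) ?_, 0, (List.rotate_zero w).symm⟩
    exact Relation.ReflTransGen.mono (fun a b hab => of_wRaw_rotate (n := 0) (by simpa using hab))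
      u w huw

end WStepRot

theorem W_moves_make_endpoints_adjacent_general (D : GWord)
    (x : ℕ)
    (harc : ∃ (n : ℕ) (arc rest : GWord) (h s : Bool),
      D.rotate n = (x, h, s) :: (arc ++ (x, !h, s) :: rest) ∧
      ∀ e ∈ arc, e.2.1 = false) :
    ∃ v : GWord, Relation.ReflTransGen WStepRot D v ∧
      ∃ (n : ℕ) (y : GWord) (h s : Bool),
        v.rotate n = (x, h, s) :: (x, !h, s) :: y := by
  obtain ⟨n, arc, rest, h, s, hrot, hall⟩ := harc
  obtain ⟨w, hDw, m, y, hw⟩ := WRaw.exists_reflTransGen_rotate_adjacent hall x h s rest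
  obtain ⟨v, hDv, k, rfl⟩ := WStepRot.exists_reflTransGen_rotEq (hrot ▸ hDw)
  exact ⟨v, hDv, k + m, y, h, s, by rwa [← List.rotate_rotate]⟩

/-- If one of the two open arcs into which the endpoints of a
chord `x` divide the cyclic word of a Gauss code `D` contains no head
endpoints, then a finite sequence of W moves transforms `D` into a Gauss code
in which the two endpoints of `x` occupy adjacent positions. -/
theorem W_moves_make_endpoints_adjacent (D : GWord) (hD : IsGaussCode D)
    (x : ℕ) (hx : x ∈ chordSet D)
    (harc : ∃ (n : ℕ) (arc rest : GWord) (h s : Bool),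
      D.rotate n = (x, h, s) :: (arc ++ (x, !h, s) :: rest) ∧
      ∀ e ∈ arc, e.2.1 = false) :
    ∃ v : GWord, Relation.ReflTransGen WStepRot D v ∧
      ∃ (n : ℕ) (y : GWord) (h s : Bool),
        v.rotate n = (x, h, s) :: (x, !h, s) :: y :=
  W_moves_make_endpoints_adjacent_general D x harc
end
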